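/- arXiv:2602.03290 — 7 statements merged into one kernel-verified Lean document; each statement's English description precedes it below -/
import Mathlib

section
/- Let H be a real Hilbert space, let n be a positive natural number, and equip H^n with the product inner product, so that ‖(x_1,…,x_n)‖² = Σ_{i=1}^n ‖x_i‖²_H. Let K ⊆ H^n be a compact set and let f : K → ℝ be continuous. Then for every ε > 0 there exist r ∈ ℕ, continuous linear functionals φ_{ji} : H → ℝ (for 1 ≤ j ≤ r, 1 ≤ i ≤ n), and continuous functions ζ_j : ℝ → ℝ (for 1 ≤ j ≤ r) such that for every (x_1,…,x_n) ∈ K one has |f(x_1,…,x_n) − Σ_{j=1}^r ζ_j(Σ_{i=1}^n φ_{ji}(x_i))| < ε. -/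
/-- **Theorem 1 (Approximation on a compact set).**
Let `H` be a real Hilbert space, `n > 0`, and equip `H^n` with the product inner product
(`PiLp 2`). For any compact `K ⊆ H^n`, continuous `f : K → ℝ`, and `ε > 0`, there are
`r ∈ ℕ`, continuous linear functionals `φ j i : H → ℝ`, and continuous scalar functions
`ζ j : ℝ → ℝ` so that `|f x - ∑ j, ζ j (∑ i, φ j i (x i))| < ε` on `K`. -/
theorem stmt_0
    (H : Type*) [NormedAddCommGroup H] [InnerProductSpace ℝ H] [CompleteSpace H]
    (n : ℕ) (hn : 0 < n)
    (K : Set (PiLp 2 (fun _ : Fin n => H))) (hK : IsCompact K)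
    (f : PiLp 2 (fun _ : Fin n => H) → ℝ) (hf : ContinuousOn f K)
    (ε : ℝ) (hε : 0 < ε) :
    ∃ (r : ℕ) (φ : Fin r → Fin n → (H →L[ℝ] ℝ)) (ζ : Fin r → ℝ → ℝ),
      (∀ j, Continuous (ζ j)) ∧
      ∀ x ∈ K, |f x - ∑ j, ζ j (∑ i, φ j i (x i))| < ε := by
  classical
  haveI : CompactSpace K := isCompact_iff_compactSpace.mp hK
  -- exponential ridge functions
  let eMap : (PiLp 2 (fun _ : Fin n => H) →L[ℝ] ℝ) → C(K, ℝ) := fun ℓ =>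
    ⟨fun x => Real.exp (ℓ (x : PiLp 2 (fun _ : Fin n => H))),
      Real.continuous_exp.comp (ℓ.continuous.comp continuous_subtype_val)⟩
  let G : Set C(K, ℝ) := Set.range eMap
  have hmul : ∀ ℓ ℓ' : PiLp 2 (fun _ : Fin n => H) →L[ℝ] ℝ, eMap ℓ * eMap ℓ' = eMap (ℓ + ℓ') := by
    intro ℓ ℓ'
    ext x
    simp [eMap, Real.exp_add]
  have hone : eMap 0 = 1 := by
    ext x; simp [eMap]
  let M : Submonoid C(K, ℝ) :=
    { carrier := G
      mul_mem' := by
        rintro _ _ ⟨ℓ, rfl⟩ ⟨ℓ', rfl⟩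
        exact ⟨ℓ + ℓ', (hmul ℓ ℓ').symm⟩
      one_mem' := ⟨0, hone⟩ }
  have hcl : Submonoid.closure G = M := Submonoid.closure_eq M
  have hspan : Subalgebra.toSubmodule (Algebra.adjoin ℝ G) = Submodule.span ℝ G := by
    rw [Algebra.adjoin_eq_span, hcl]; rfl
  -- the adjoined algebra separates points
  have hsep : (Algebra.adjoin ℝ G).SeparatesPoints := by
    intro x y hxy
    have hv : (x : PiLp 2 (fun _ : Fin n => H)) ≠ (y : PiLp 2 (fun _ : Fin n => H)) := fun h => hxy (Subtype.ext h)
    set ℓ : PiLp 2 (fun _ : Fin n => H) →L[ℝ] ℝ := innerSL ℝ ((x : PiLp 2 (fun _ : Fin n => H)) - (y : PiLp 2 (fun _ : Fin n => H))) with hℓ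
    refine ⟨(eMap ℓ : K → ℝ), ⟨eMap ℓ, Algebra.subset_adjoin ⟨ℓ, rfl⟩, rfl⟩, ?_⟩
    have hne : ℓ (x : PiLp 2 (fun _ : Fin n => H)) ≠ ℓ (y : PiLp 2 (fun _ : Fin n => H)) := by
      intro h
      apply hv
      have h2 : (inner ℝ ((x : PiLp 2 (fun _ : Fin n => H)) - (y : PiLp 2 (fun _ : Fin n => H))) ((x : PiLp 2 (fun _ : Fin n => H)) - (y : PiLp 2 (fun _ : Fin n => H))) : ℝ) = 0 := by
        have h' : (inner ℝ ((x : PiLp 2 (fun _ : Fin n => H)) - (y : PiLp 2 (fun _ : Fin n => H))) (x : PiLp 2 (fun _ : Fin n => H)) : ℝ) = inner ℝ ((x : PiLp 2 (fun _ : Fin n => H)) - (y : PiLp 2 (fun _ : Fin n => H))) (y : PiLp 2 (fun _ : Fin n => H)) := by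
          simpa only [hℓ, innerSL_apply_apply] using h
        rw [inner_sub_right, h', sub_self]
      exact sub_eq_zero.mp (inner_self_eq_zero.mp h2)
    simp only [eMap, ContinuousMap.coe_mk]
    exact fun h => hne (Real.exp_injective h)
  -- Stone–Weierstrass approximation
  obtain ⟨g, hg⟩ := ContinuousMap.exists_mem_subalgebra_near_continuous_of_separatesPoints
    (Algebra.adjoin ℝ G) hsep (K.restrict f) hf.restrict ε hε
  -- write g as a finite linear combination of exponential ridge functions
  have hgmem : (g : C(K, ℝ)) ∈ Submodule.span ℝ G := by
    rw [← hspan]; exact g.2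
  obtain ⟨r, c, gs, hsum⟩ := Submodule.mem_span_set'.mp hgmem
  choose ℓ hℓeq using fun j => (gs j).2
  -- single-coordinate embeddings
  have contSingle : ∀ i : Fin n, Continuous (fun v : H => (Pi.single i v : ∀ _ : Fin n, H)) := by
    intro i
    apply continuous_pi
    intro j
    rcases eq_or_ne j i with rfl | h
    · simpa using continuous_id'
    · simp only [Pi.single_eq_of_ne h]
      exact continuous_const
  let sCLM : Fin n → (H →L[ℝ] PiLp 2 (fun _ : Fin n => H)) := fun i =>
    { toLinearMap :=
        ((WithLp.linearEquiv 2 ℝ (∀ _ : Fin n, H)).symm.toLinearMap.comp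
          (LinearMap.single ℝ (fun _ : Fin n => H) i))
      cont := by
        exact ((PiLp.continuousLinearEquiv 2 ℝ (fun _ : Fin n => H)).symm.continuous).comp
          (contSingle i) }
  have hrecover : ∀ (j : Fin r) (x : PiLp 2 (fun _ : Fin n => H)), ∑ i, (ℓ j) (sCLM i (x i)) = (ℓ j) x := by
    intro j x
    have hx : ∑ i, sCLM i (x i) = x := by
      apply (WithLp.linearEquiv 2 ℝ (∀ _ : Fin n, H)).injective
      rw [map_sum]
      simp only [sCLM, ContinuousLinearMap.coe_mk', LinearMap.coe_comp, Function.comp_apply,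
        LinearEquiv.coe_coe, LinearMap.single_apply, LinearEquiv.apply_symm_apply]
      exact Finset.univ_sum_single _
    rw [← map_sum, hx]
  refine ⟨r, fun j i => (ℓ j).comp (sCLM i), fun j t => c j * Real.exp t,
    fun j => continuous_const.mul Real.continuous_exp, ?_⟩
  intro x hx
  have key : ∑ j, c j * Real.exp ((ℓ j) x) = (g : C(K, ℝ)) ⟨x, hx⟩ := by
    rw [← hsum]
    simp only [ContinuousMap.coe_sum, Finset.sum_apply, ContinuousMap.coe_smul, Pi.smul_apply,
      smul_eq_mul]
    refine Finset.sum_congr rfl fun j _ => ?_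
    rw [← hℓeq j]
    simp [eMap]
  have : ∑ j, c j * Real.exp (∑ i, (ℓ j) (sCLM i (x i))) = (g : C(K, ℝ)) ⟨x, hx⟩ := by
    rw [← key]
    exact Finset.sum_congr rfl fun j _ => by rw [hrecover j x]
  simp only [ContinuousLinearMap.comp_apply]
  rw [this]
  have := hg ⟨x, hx⟩
  rw [Real.norm_eq_abs] at this
  calc |f x - (g : C(K, ℝ)) ⟨x, hx⟩|
      = |(g : C(K, ℝ)) ⟨x, hx⟩ - K.restrict f ⟨x, hx⟩| := by
        rw [abs_sub_comm]; rfl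
    _ < ε := this
end

section
/- Let X be a real Hilbert space, let K ⊆ X be a compact set, and let f : K → ℝ be continuous. Then for every ε > 0 there exist r ∈ ℕ, vectors t_1,…,t_r ∈ X, and continuous functions ζ_1,…,ζ_r : ℝ → ℝ such that for every x ∈ K one has |f(x) − Σ_{j=1}^r ζ_j(⟨t_j, x⟩)| < ε. -/
open scoped RealInnerProductSpace Pointwise

/-- Single-space form of Theorem 1: any continuous `f : K → ℝ` on a compact subset `K` of a
real Hilbert space `X` is uniformly approximated by `x ↦ ∑ j, ζ j ⟪t j, x⟫` with `t j ∈ X`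
and continuous `ζ j : ℝ → ℝ`. -/
theorem stmt_1
    (X : Type*) [NormedAddCommGroup X] [InnerProductSpace ℝ X] [CompleteSpace X]
    (K : Set X) (hK : IsCompact K)
    (f : X → ℝ) (hf : ContinuousOn f K)
    (ε : ℝ) (hε : 0 < ε) :
    ∃ (r : ℕ) (t : Fin r → X) (ζ : Fin r → ℝ → ℝ),
      (∀ j, Continuous (ζ j)) ∧
      ∀ x ∈ K, |f x - ∑ j, ζ j ⟪t j, x⟫| < ε := by
  haveI : CompactSpace K := isCompact_iff_compactSpace.mp hK
  -- the exponential of a linear functional, as a continuous map on K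
  let E : X → C(K, ℝ) := fun t =>
    ⟨fun x => Real.exp ⟪t, (x : X)⟫,
      Real.continuous_exp.comp ((continuous_const.inner continuous_subtype_val))⟩
  have hEmul : ∀ s t : X, E s * E t = E (s + t) := by
    intro s t
    ext x
    simp [E, inner_add_left, Real.exp_add]
  have hrange : (Set.range E) * (Set.range E) ⊆ Set.range E := by
    rintro _ ⟨_, ⟨s, rfl⟩, _, ⟨t, rfl⟩, rfl⟩
    exact ⟨s + t, (hEmul s t).symm⟩
  -- the span of the exponentials is a subalgebra
  let A : Subalgebra ℝ C(K, ℝ) :=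
    { Submodule.span ℝ (Set.range E) with
      mul_mem' := by
        intro a b ha hb
        have : a * b ∈ Submodule.span ℝ (Set.range E) * Submodule.span ℝ (Set.range E) :=
          Submodule.mul_mem_mul ha hb
        rw [Submodule.span_mul_span] at this
        exact Submodule.span_mono hrange this
      one_mem' := by
        have : (1 : C(K, ℝ)) = E 0 := by
          ext x; simp [E]
        rw [this]
        exact Submodule.subset_span ⟨0, rfl⟩
      algebraMap_mem' := by
        intro c
        have : (algebraMap ℝ C(K, ℝ)) c = c • E 0 := by
          ext x; simp [E, Algebra.algebraMap_eq_smul_one]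
        rw [this]
        exact Submodule.smul_mem _ _ (Submodule.subset_span ⟨0, rfl⟩) }
  have hA : A.SeparatesPoints := by
    intro x y hxy
    refine ⟨_, ⟨E ((x : X) - (y : X)), Submodule.subset_span ⟨_, rfl⟩, rfl⟩, ?_⟩
    have hxyX : (x : X) - (y : X) ≠ 0 := sub_ne_zero.mpr (Subtype.coe_injective.ne hxy)
    have : ⟪(x : X) - (y : X), (x : X)⟫ ≠ ⟪(x : X) - (y : X), (y : X)⟫ := by
      intro h
      apply hxyX
      have h2 : ⟪(x : X) - (y : X), (x : X) - (y : X)⟫ = 0 := by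
        rw [inner_sub_right, h, sub_self]
      exact inner_self_eq_zero.mp h2
    simpa [E] using fun h => this (Real.exp_injective h)
  obtain ⟨g, hg⟩ := ContinuousMap.exists_mem_subalgebra_near_continuous_of_separatesPoints A hA
    (fun x : K => f x) (hf.restrict) ε hε
  obtain ⟨r, c, u, hu⟩ := Submodule.mem_span_set'.mp g.2
  refine ⟨r, fun j => Classical.choose (u j).2, fun j y => c j * Real.exp y,
    fun j => by continuity, fun x hx => ?_⟩
  have key : ∑ j, c j * Real.exp ⟪Classical.choose (u j).2, x⟫ = (g : C(K, ℝ)) ⟨x, hx⟩ := by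
    rw [← hu]
    rw [ContinuousMap.sum_apply]
    refine Finset.sum_congr rfl fun j _ => ?_
    have hspec := Classical.choose_spec (u j).2
    calc c j * Real.exp ⟪Classical.choose (u j).2, x⟫
        = c j • (E (Classical.choose (u j).2)) ⟨x, hx⟩ := rfl
      _ = (c j • (u j : C(K, ℝ))) ⟨x, hx⟩ := by rw [hspec]; rfl
  rw [key]
  have := hg ⟨x, hx⟩
  rw [Real.norm_eq_abs] at this
  rw [abs_sub_comm]
  exact this
end

section
/- Let X be a real Hilbert space, let K ⊆ X be compact, and let f : K → ℝ be continuous. Then for every ε > 0 there exist a finite-dimensional subspace V ⊆ X with orthogonal projection P : X → V, and a continuous function F : P(K) → ℝ on the compact set P(K) ⊆ V, such that |f(x) − F(Px)| < ε for every x ∈ K. -/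
/-- **Steps 2–3 of the proof of Theorem 1 (finite-dimensional reduction).**
For a compact `K` in a real Hilbert space `X`, a continuous `f : K → ℝ`, and `ε > 0`,
there are a finite-dimensional subspace `V ⊆ X` with orthogonal projection `P : X → V`
and a continuous function `F` on the compact set `P(K) ⊆ V` such that
`|f x - F (P x)| < ε` for every `x ∈ K`. -/
theorem stmt_3
    (X : Type*) [NormedAddCommGroup X] [InnerProductSpace ℝ X] [CompleteSpace X]
    (K : Set X) (hK : IsCompact K)
    (f : X → ℝ) (hf : ContinuousOn f K)
    (ε : ℝ) (hε : 0 < ε) :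
    ∃ (V : Submodule ℝ X) (hV : FiniteDimensional ℝ V),
      letI : FiniteDimensional ℝ V := hV
      ∃ F : V → ℝ,
        ContinuousOn F (V.orthogonalProjectionOnto '' K) ∧
        ∀ x ∈ K, |f x - F (V.orthogonalProjectionOnto x)| < ε := by
  -- uniform continuity of `f` on the compact set `K`
  obtain ⟨r, hr, hur⟩ : ∃ r > 0, ∀ a ∈ K, ∀ b ∈ K, dist a b < r → dist (f a) (f b) < ε / 2 :=
    (Metric.uniformContinuousOn_iff).1 (hK.uniformContinuousOn_of_continuous hf) (ε / 2)
      (by linarith)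
  -- a finite `r/4`-net of `K` with centers in `K`
  obtain ⟨t, htK, htfin, htcov⟩ :=
    hK.elim_finite_subcover_image (b := K) (c := fun c => Metric.ball c (r / 4))
      (fun c _ => Metric.isOpen_ball)
      (fun x hx => Set.mem_biUnion hx (Metric.mem_ball_self (by linarith)))
  set V : Submodule ℝ X := Submodule.span ℝ t with hVdef
  have hVfd : FiniteDimensional ℝ V := FiniteDimensional.span_of_finite ℝ htfin
  refine ⟨V, hVfd, ?_⟩
  set P := V.orthogonalProjectionOnto with hP
  -- the projection does not increase the norm
  have hPle : ∀ u : X, ‖(P u : X)‖ ≤ ‖u‖ := by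
    intro u
    calc ‖(P u : X)‖ = ‖P u‖ := rfl
      _ ≤ ‖P‖ * ‖u‖ := P.le_opNorm u
      _ ≤ 1 * ‖u‖ := mul_le_mul_of_nonneg_right (Submodule.orthogonalProjectionOnto_norm_le V) (norm_nonneg u)
      _ = ‖u‖ := one_mul _
  -- distance of a point of `K` to its projection is small
  have hnet : ∀ x ∈ K, ∃ c ∈ t, dist x c < r / 4 := by
    intro x hx
    obtain ⟨c, hc, hxc⟩ := Set.mem_iUnion₂.1 (htcov hx)
    exact ⟨c, hc, Metric.mem_ball.1 hxc⟩
  have hproj : ∀ x ∈ K, ‖x - (P x : X)‖ < r / 4 := by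
    intro x hx
    obtain ⟨c, hc, hxc⟩ := hnet x hx
    have hcV : c ∈ V := Submodule.subset_span hc
    have hmin : ‖x - (P x : X)‖ = ⨅ w : V, ‖x - (w : X)‖ := Submodule.starProjection_minimal x
    have hle : ‖x - (P x : X)‖ ≤ ‖x - c‖ := by
      rw [hmin]
      exact ciInf_le ⟨0, by rintro _ ⟨w, rfl⟩; positivity⟩ (⟨c, hcV⟩ : V)
    calc ‖x - (P x : X)‖ ≤ ‖x - c‖ := hle
      _ < r / 4 := by rwa [← dist_eq_norm]
  -- bump functions on `V`
  set ψ : X → V → ℝ := fun c v => max (r / 2 - ‖(v : X) - c‖) 0 with hψ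
  have hψ0 : ∀ c v, 0 ≤ ψ c v := fun c v => le_max_right _ _
  have hψcont : ∀ c : X, Continuous fun v : V => ψ c v := fun c =>
    ((continuous_const.sub ((continuous_subtype_val.sub continuous_const).norm)).max
      continuous_const)
  set T := htfin.toFinset with hT
  -- the denominator is positive on the projection of `K`
  have hden : ∀ x ∈ K, 0 < ∑ c ∈ T, ψ c (P x) := by
    intro x hx
    obtain ⟨c, hc, hxc⟩ := hnet x hx
    have hcV : c ∈ V := Submodule.subset_span hc
    have hPc : (P c : X) = c := Submodule.starProjection_eq_self_iff.2 hcV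
    have h1 : ‖(P x : X) - c‖ < r / 4 := by
      have : (P x : X) - c = (P (x - c) : X) := by
        rw [map_sub]; push_cast; rw [hPc]
      rw [this]
      calc ‖(P (x - c) : X)‖ ≤ ‖x - c‖ := hPle _
        _ < r / 4 := by rwa [← dist_eq_norm]
    have h2 : 0 < ψ c (P x) := by
      rw [hψ]
      simp only [lt_max_iff]
      left; linarith
    refine lt_of_lt_of_le h2 ?_
    exact Finset.single_le_sum (f := fun c => ψ c (P x)) (fun i _ => hψ0 i (P x))
      (htfin.mem_toFinset.2 hc)
  -- the function `F`
  refine ⟨fun v => (∑ c ∈ T, ψ c v * f c) / (∑ c ∈ T, ψ c v), ?_, ?_⟩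
  · -- continuity on `P '' K`
    apply ContinuousOn.div
    · exact (continuous_finset_sum T fun c _ => (hψcont c).mul continuous_const).continuousOn
    · exact (continuous_finset_sum T fun c _ => hψcont c).continuousOn
    · rintro v ⟨x, hx, rfl⟩
      exact (hden x hx).ne'
  · -- the approximation estimate
    intro x hx
    set S := ∑ c ∈ T, ψ c (P x) with hS
    have hSpos : 0 < S := hden x hx
    have key : ∀ c ∈ T, ψ c (P x) * |f x - f c| ≤ ψ c (P x) * (ε / 2) := by
      intro c hc
      rcases eq_or_lt_of_le (hψ0 c (P x)) with h0 | h0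
      · rw [← h0]; simp
      · have hball : ‖(P x : X) - c‖ < r / 2 := by
          have := lt_max_iff.1 (show 0 < ψ c (P x) from h0)
          rcases this with h | h
          · linarith
          · exact absurd h (lt_irrefl 0)
        have hcK : c ∈ K := htK (htfin.mem_toFinset.1 hc)
        have hdxc : dist x c < r := by
          have h1 : ‖x - (P x : X)‖ < r / 4 := hproj x hx
          calc dist x c ≤ dist x (P x : X) + dist (P x : X) c := dist_triangle _ _ _
            _ = ‖x - (P x : X)‖ + ‖(P x : X) - c‖ := by rw [dist_eq_norm, dist_eq_norm]
            _ < r / 4 + r / 2 := by linarith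
            _ < r := by linarith
        have : |f x - f c| < ε / 2 := by
          have := hur x hx c hcK hdxc
          rwa [Real.dist_eq] at this
        exact mul_le_mul_of_nonneg_left this.le (hψ0 c (P x))
    have hnum : f x - (∑ c ∈ T, ψ c (P x) * f c) / S
        = (∑ c ∈ T, ψ c (P x) * (f x - f c)) / S := by
      rw [eq_div_iff hSpos.ne', sub_mul, div_mul_cancel₀ _ hSpos.ne']
      rw [hS, Finset.mul_sum, ← Finset.sum_sub_distrib]
      congr 1
      ext c
      ring
    rw [hnum, abs_div, abs_of_pos hSpos]
    have habs : |∑ c ∈ T, ψ c (P x) * (f x - f c)| ≤ S * (ε / 2) := by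
      calc |∑ c ∈ T, ψ c (P x) * (f x - f c)| ≤ ∑ c ∈ T, |ψ c (P x) * (f x - f c)| :=
            Finset.abs_sum_le_sum_abs _ _
        _ = ∑ c ∈ T, ψ c (P x) * |f x - f c| := by
            refine Finset.sum_congr rfl fun c hc => ?_
            rw [abs_mul, abs_of_nonneg (hψ0 c (P x))]
        _ ≤ ∑ c ∈ T, ψ c (P x) * (ε / 2) := Finset.sum_le_sum key
        _ = S * (ε / 2) := by rw [hS, Finset.sum_mul]
    calc |∑ c ∈ T, ψ c (P x) * (f x - f c)| / S ≤ S * (ε / 2) / S :=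
          div_le_div_of_nonneg_right habs hSpos.le
      _ = ε / 2 := by field_simp
      _ < ε := by linarith
end

section
/- Let H be a real Hilbert space, let n be a positive natural number, and equip H^n with the product inner product. Let K ⊆ H^n be compact, let Y be a real Banach space, and let f : K → Y be continuous. Then for every ε > 0 there exist r ∈ ℕ, vectors y_1,…,y_r ∈ Y, continuous linear functionals φ_{ji} : H → ℝ (for 1 ≤ j ≤ r, 1 ≤ i ≤ n), and continuous functions ζ_j : ℝ → ℝ (for 1 ≤ j ≤ r) such that the map g(x_1,…,x_n) := Σ_{j=1}^r ζ_j(Σ_{i=1}^n φ_{ji}(x_i)) · y_j satisfies sup_{x ∈ K} ‖f(x) − g(x)‖_Y < ε. Moreover g(K) is contained in the finite-dimensional subspace span{y_1,…,y_r} of Y. -/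
open Finset


lemma polarize (a b : ℕ) : ∃ c : Fin (a+b+1) → ℝ,
    ∀ u v : ℝ, u^a * v^b = ∑ i, c i * (u + (i:ℝ)*v)^(a+b) := by
  set d := a + b with hd
  set M : Matrix (Fin (d+1)) (Fin (d+1)) ℝ := Matrix.vandermonde (fun i => (i:ℝ)) with hM
  have hdet : M.det ≠ 0 := by
    rw [hM, Matrix.det_vandermonde_ne_zero_iff]
    exact fun i j h => by exact_mod_cast Fin.ext (Nat.cast_injective h)
  have hinv : M⁻¹ * M = 1 := Matrix.nonsing_inv_mul M (by simpa using hdet)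
  set j₀ : Fin (d+1) := ⟨b, by omega⟩ with hj₀
  have hCb : (0:ℝ) < (d.choose b : ℝ) := by
    exact_mod_cast Nat.choose_pos (by omega)
  refine ⟨fun i => (M⁻¹) j₀ i / (d.choose b : ℝ), fun u v => ?_⟩
  set w : Fin (d+1) → ℝ := fun j => (d.choose (j:ℕ) : ℝ) * u^(d-(j:ℕ)) * v^(j:ℕ) with hw
  have key : ∀ i : Fin (d+1), (u + (i:ℝ)*v)^d = ∑ j, M i j * w j := by
    intro i
    have := add_pow ((i:ℝ)*v) u d
    rw [add_comm u ((i:ℝ)*v), this, ← Fin.sum_univ_eq_sum_range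
      (fun k => ((i:ℝ)*v)^k * u^(d-k) * (d.choose k : ℝ))]
    refine Finset.sum_congr rfl fun j _ => ?_
    simp only [hw, hM, Matrix.vandermonde_apply, mul_pow]
    ring
  have hMw : M.mulVec w = fun i : Fin (d+1) => (u + (i:ℝ)*v)^d := by
    funext i
    rw [key i]
    simp [Matrix.mulVec, dotProduct]
  have hrec : w = (M⁻¹).mulVec (fun i : Fin (d+1) => (u + (i:ℝ)*v)^d) := by
    rw [← hMw, Matrix.mulVec_mulVec, hinv, Matrix.one_mulVec]
  have hwj : w j₀ = (d.choose b : ℝ) * u^a * v^b := by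
    simp only [hw, hj₀, Fin.val_mk, mul_assoc]
    congr 3
    omega
  have := congrFun hrec j₀
  rw [hwj] at this
  have h2 : u^a * v^b = (1 / (d.choose b : ℝ)) * ((M⁻¹).mulVec (fun i : Fin (d+1) => (u + (i:ℝ)*v)^d) j₀) := by
    rw [← this]; field_simp
  rw [h2]
  simp only [Matrix.mulVec, dotProduct, Finset.mul_sum]
  refine Finset.sum_congr rfl fun i _ => ?_
  ring

section Alg
variable {E : Type*} [NormedAddCommGroup E] [InnerProductSpace ℝ E] (K : Set E)

noncomputable def ridge (q : E × ℕ) : C(K, ℝ) :=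
  ⟨fun x => (inner ℝ q.1 (x:E) : ℝ)^q.2, by
    exact ((continuous_const.inner continuous_subtype_val)).pow _⟩

lemma ridge_apply (q : E × ℕ) (x : K) : ridge K q x = (inner ℝ q.1 (x:E) : ℝ)^q.2 := rfl

lemma ridge_mul_mem (p q : E × ℕ) :
    ridge K p * ridge K q ∈ Submodule.span ℝ (Set.range (ridge K)) := by
  obtain ⟨v, a⟩ := p
  obtain ⟨w, b⟩ := q
  obtain ⟨c, hc⟩ := polarize a b
  have : ridge K (v, a) * ridge K (w, b)
      = ∑ i : Fin (a+b+1), c i • ridge K (v + (i:ℝ) • w, a+b) := by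
    ext x
    simp only [ContinuousMap.mul_apply, ContinuousMap.coe_sum, ContinuousMap.coe_smul,
      Finset.sum_apply, Pi.smul_apply, ridge_apply, smul_eq_mul]
    rw [hc (inner ℝ v (x:E)) (inner ℝ w (x:E))]
    refine Finset.sum_congr rfl fun i _ => ?_
    rw [inner_add_left, real_inner_smul_left]
  rw [this]
  exact Submodule.sum_mem _ fun i _ =>
    Submodule.smul_mem _ _ (Submodule.subset_span (Set.mem_range_self _))

lemma span_ridge_mul_closed :
    ∀ g₁ ∈ Submodule.span ℝ (Set.range (ridge K)), ∀ g₂ ∈ Submodule.span ℝ (Set.range (ridge K)),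
      g₁ * g₂ ∈ Submodule.span ℝ (Set.range (ridge K)) := by
  intro g₁ h₁ g₂ h₂
  induction h₁ using Submodule.span_induction with
  | mem a ha =>
    induction h₂ using Submodule.span_induction with
    | mem b hb =>
      obtain ⟨p, rfl⟩ := ha; obtain ⟨q, rfl⟩ := hb
      exact ridge_mul_mem K p q
    | zero => simpa using Submodule.zero_mem _
    | add b₁ b₂ _ _ ih1 ih2 => rw [mul_add]; exact Submodule.add_mem _ ih1 ih2
    | smul r b _ ih => rw [mul_smul_comm]; exact Submodule.smul_mem _ _ ih
  | zero => simpa using Submodule.zero_mem _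
  | add a₁ a₂ _ _ ih1 ih2 => rw [add_mul]; exact Submodule.add_mem _ ih1 ih2
  | smul r a _ ih => rw [smul_mul_assoc]; exact Submodule.smul_mem _ _ ih

lemma one_mem_ridge : (1 : C(K, ℝ)) ∈ Set.range (ridge K) := by
  refine ⟨(0, 0), ?_⟩
  ext x
  simp [ridge_apply]

lemma adjoin_le_span :
    (Algebra.adjoin ℝ (Set.range (ridge K)) : Set C(K, ℝ))
      ⊆ Submodule.span ℝ (Set.range (ridge K)) := by
  intro a ha
  induction ha using Algebra.adjoin_induction with
  | mem x hx => exact Submodule.subset_span hx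
  | algebraMap r =>
    have : (algebraMap ℝ C(K, ℝ)) r = r • (1 : C(K, ℝ)) := by
      simp [Algebra.algebraMap_eq_smul_one]
    rw [this]
    exact Submodule.smul_mem _ _ (Submodule.subset_span (one_mem_ridge K))
  | add x y _ _ ihx ihy => exact Submodule.add_mem _ ihx ihy
  | mul x y hx hy ihx ihy => exact span_ridge_mul_closed K x ihx y ihy

end Alg

section SW
variable {E : Type*} [NormedAddCommGroup E] [InnerProductSpace ℝ E] (K : Set E)

lemma ridge_dense [CompactSpace K] (u : C(K, ℝ)) {η : ℝ} (hη : 0 < η) :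
    ∃ a ∈ Submodule.span ℝ (Set.range (ridge K)), ‖u - a‖ < η := by
  set A : Subalgebra ℝ C(K, ℝ) := Algebra.adjoin ℝ (Set.range (ridge K)) with hA
  have hsep : A.SeparatesPoints := by
    intro x y hxy
    refine ⟨ridge K ((x:E) - (y:E), 1), ?_, ?_⟩
    · exact ⟨ridge K ((x:E) - (y:E), 1), Algebra.subset_adjoin (Set.mem_range_self _), rfl⟩
    · simp only [ridge_apply, pow_one]
      intro h
      have : (inner ℝ ((x:E) - (y:E)) ((x:E) - (y:E)) : ℝ) = 0 := by
        rw [inner_sub_right, h, sub_self]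
      have hx : (x:E) = (y:E) := by
        rwa [inner_self_eq_zero, sub_eq_zero] at this
      exact hxy (Subtype.ext hx)
  have hcl : A.topologicalClosure = ⊤ :=
    ContinuousMap.subalgebra_topologicalClosure_eq_top_of_separatesPoints A hsep
  have hu : u ∈ closure (A : Set C(K, ℝ)) := by
    have : u ∈ A.topologicalClosure := by rw [hcl]; trivial
    exact this
  obtain ⟨a, haA, hdist⟩ := Metric.mem_closure_iff.mp hu η hη
  exact ⟨a, adjoin_le_span K haA, by rwa [← dist_eq_norm]⟩

end SW

lemma ridge_approx {E : Type*} [NormedAddCommGroup E] [InnerProductSpace ℝ E] (K : Set E)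
    [CompactSpace K] (u : C(K, ℝ)) {η : ℝ} (hη : 0 < η) :
    ∃ (N : ℕ) (coef : Fin N → ℝ) (vv : Fin N → E) (dd : Fin N → ℕ),
      ∀ x : K, |u x - ∑ j, coef j * (inner ℝ (vv j) (x:E) : ℝ)^(dd j)| < η := by
  obtain ⟨a, haP, hnorm⟩ := ridge_dense K u hη
  obtain ⟨N, coef, g, hg⟩ := Submodule.mem_span_set'.mp haP
  have hgq : ∀ j, ∃ q : E × ℕ, ridge K q = (g j : C(K,ℝ)) := fun j => (g j).2
  choose q hq using hgq
  refine ⟨N, coef, fun j => (q j).1, fun j => (q j).2, fun x => ?_⟩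
  have ha : a x = ∑ j, coef j * (inner ℝ ((q j).1) (x:E) : ℝ)^((q j).2) := by
    rw [← hg]
    simp only [ContinuousMap.coe_sum, Finset.sum_apply, ContinuousMap.coe_smul, Pi.smul_apply,
      smul_eq_mul]
    refine Finset.sum_congr rfl fun j _ => ?_
    rw [← hq j, ridge_apply]
  rw [← ha]
  calc |u x - a x| ≤ ‖u - a‖ := by
        rw [show u x - a x = (u - a) x from rfl, ← Real.norm_eq_abs]
        exact ContinuousMap.norm_coe_le_norm (u - a) x
    _ < η := hnorm

lemma main_approx {E : Type*} [NormedAddCommGroup E] [InnerProductSpace ℝ E]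
    (K : Set E) (hK : IsCompact K)
    {Y : Type*} [NormedAddCommGroup Y] [NormedSpace ℝ Y]
    (f : E → Y) (hf : ContinuousOn f K) {ε : ℝ} (hε : 0 < ε) :
    ∃ (r : ℕ) (y : Fin r → Y) (vv : Fin r → E) (ζ : Fin r → ℝ → ℝ),
      (∀ j, Continuous (ζ j)) ∧
      ∀ x ∈ K, ‖f x - ∑ j, ζ j (inner ℝ (vv j) x : ℝ) • y j‖ < ε := by
  classical
  rcases K.eq_empty_or_nonempty with rfl | hKne
  · exact ⟨0, Fin.elim0, Fin.elim0, Fin.elim0, fun j => j.elim0, fun x hx => hx.elim⟩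
  haveI : CompactSpace K := isCompact_iff_compactSpace.mp hK
  -- uniform continuity
  obtain ⟨δ, hδ, hucont⟩ := (Metric.uniformContinuousOn_iff.mp
    (hK.uniformContinuousOn_of_continuous hf)) (ε/2) (by positivity)
  -- finite cover by balls centered in K
  obtain ⟨t, ht⟩ := hK.elim_finite_subcover (fun c : K => Metric.ball (c : E) δ)
    (fun c => Metric.isOpen_ball) (fun x hx => Set.mem_iUnion.mpr ⟨⟨x, hx⟩, by simpa using hδ⟩)
  have htne : t.Nonempty := by
    obtain ⟨x, hx⟩ := hKne
    obtain ⟨c, hc⟩ := Set.mem_iUnion.mp (ht hx)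
    simp only [Set.mem_iUnion] at hc
    obtain ⟨hct, _⟩ := hc
    exact ⟨c, hct⟩
  -- bump functions
  set vb : K → E → ℝ := fun c z => max (δ - dist z (c : E)) 0 with hvb
  set Vs : E → ℝ := fun z => ∑ c ∈ t, vb c z with hVs
  have hvb_nonneg : ∀ c z, 0 ≤ vb c z := fun c z => le_max_right _ _
  have hVs_pos : ∀ z ∈ K, 0 < Vs z := by
    intro z hz
    obtain ⟨c, hc⟩ := Set.mem_iUnion.mp (ht hz)
    simp only [Set.mem_iUnion] at hc
    obtain ⟨hct, hzc⟩ := hc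
    refine Finset.sum_pos' (fun c _ => hvb_nonneg c z) ⟨c, hct, ?_⟩
    have : dist z (c : E) < δ := Metric.mem_ball.mp hzc
    simp only [hvb, lt_max_iff]
    left; linarith
  have hvb_cont : ∀ c : K, Continuous (vb c) :=
    fun c => ((continuous_const.sub (continuous_id.dist continuous_const)).max continuous_const)
  have hVs_cont : Continuous Vs := continuous_finset_sum _ fun c _ => hvb_cont c
  -- partition of unity
  set u : {c : K // c ∈ t} → C(K, ℝ) := fun c =>
    ⟨fun x => vb c (x : E) / Vs (x : E), by
      exact ((hvb_cont c).comp continuous_subtype_val).div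
        (hVs_cont.comp continuous_subtype_val) (fun x => (hVs_pos _ x.2).ne')⟩ with hu
  have hu_nonneg : ∀ c (x : K), 0 ≤ u c x :=
    fun c x => div_nonneg (hvb_nonneg _ _) (hVs_pos _ x.2).le
  have hu_sum : ∀ x : K, ∑ c : {c : K // c ∈ t}, u c x = 1 := by
    intro x
    simp only [hu, ContinuousMap.coe_mk]
    rw [← Finset.sum_div, Finset.sum_coe_sort t (fun c => vb c (x : E))]
    exact div_self (hVs_pos _ x.2).ne'
  have hu_supp : ∀ c (x : K), u c x ≠ 0 → dist (x : E) ((c : K) : E) < δ := by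
    intro c x h
    by_contra hd
    apply h
    simp only [hu, ContinuousMap.coe_mk]
    have : vb (c : K) (x : E) = 0 := by
      simp only [hvb, max_eq_right_iff]
      linarith [not_lt.mp hd]
    rw [this, zero_div]
  -- scalar data
  set M' : ℝ := ∑ c ∈ t, (‖f (c : E)‖ + 1) with hM'
  have hM'pos : 0 < M' := Finset.sum_pos (fun c _ => by positivity) htne
  set η : ℝ := ε / (2 * M') with hηdef
  have hη : 0 < η := by positivity
  have hap : ∀ c : {c : K // c ∈ t}, ∃ (N : ℕ) (coef : Fin N → ℝ) (vv : Fin N → E)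
      (dd : Fin N → ℕ), ∀ x : K,
      |u c x - ∑ j, coef j * (inner ℝ (vv j) (x:E) : ℝ)^(dd j)| < η :=
    fun c => ridge_approx K (u c) hη
  choose N coef vv dd hcd using hap
  set ι := Σ c : {c : K // c ∈ t}, Fin (N c) with hι
  set e : ι ≃ Fin (Fintype.card ι) := Fintype.equivFin ι with he
  refine ⟨Fintype.card ι, fun j => f (((e.symm j).1 : K) : E),
    fun j => vv (e.symm j).1 (e.symm j).2,
    fun j s => coef (e.symm j).1 (e.symm j).2 * s ^ (dd (e.symm j).1 (e.symm j).2),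
    fun j => continuous_const.mul (continuous_pow _), fun x hx => ?_⟩
  set x' : K := ⟨x, hx⟩ with hx'
  set A : {c : K // c ∈ t} → ℝ :=
    fun c => ∑ k, coef c k * (inner ℝ (vv c k) x : ℝ)^(dd c k) with hA
  have hg : ∑ j, (coef (e.symm j).1 (e.symm j).2 *
        (inner ℝ (vv (e.symm j).1 (e.symm j).2) x : ℝ) ^ (dd (e.symm j).1 (e.symm j).2)) •
        f (((e.symm j).1 : K) : E)
      = ∑ c : {c : K // c ∈ t}, A c • f ((c : K) : E) := by
    rw [Equiv.sum_comp e.symm (fun s : ι => (coef s.1 s.2 *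
        (inner ℝ (vv s.1 s.2) x : ℝ) ^ (dd s.1 s.2)) • f ((s.1 : K) : E))]
    rw [← Finset.univ_sigma_univ, Finset.sum_sigma]
    refine Finset.sum_congr rfl fun c _ => ?_
    rw [hA, Finset.sum_smul]
  rw [hg]
  have hfx : f x = ∑ c : {c : K // c ∈ t}, u c x' • f x := by
    rw [← Finset.sum_smul, hu_sum x', one_smul]
  have hsplit : f x - ∑ c : {c : K // c ∈ t}, A c • f ((c : K) : E)
      = (∑ c : {c : K // c ∈ t}, u c x' • (f x - f ((c : K) : E)))
        + ∑ c : {c : K // c ∈ t}, (u c x' - A c) • f ((c : K) : E) := by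
    rw [← Finset.sum_add_distrib]
    have hterm : ∀ c : {c : K // c ∈ t},
        u c x' • (f x - f ((c : K) : E)) + (u c x' - A c) • f ((c : K) : E)
          = u c x' • f x - A c • f ((c : K) : E) := by
      intro c; rw [smul_sub, sub_smul]; abel
    simp_rw [hterm]
    rw [Finset.sum_sub_distrib, ← hfx]
  rw [hsplit]
  have hb1 : ‖∑ c : {c : K // c ∈ t}, u c x' • (f x - f ((c : K) : E))‖ ≤ ε/2 := by
    refine (norm_sum_le _ _).trans ?_
    have hterm : ∀ c : {c : K // c ∈ t},
        ‖u c x' • (f x - f ((c : K) : E))‖ ≤ u c x' * (ε/2) := by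
      intro c
      rw [norm_smul, Real.norm_eq_abs, abs_of_nonneg (hu_nonneg c x')]
      by_cases h : u c x' = 0
      · simp [h]
      · refine mul_le_mul_of_nonneg_left ?_ (hu_nonneg c x')
        have hd := hu_supp c x' h
        have hcK : ((c : K) : E) ∈ K := (c : K).2
        have := hucont x hx ((c : K) : E) hcK hd
        rw [← dist_eq_norm]
        exact this.le
    refine (Finset.sum_le_sum fun c _ => hterm c).trans ?_
    rw [← Finset.sum_mul, hu_sum x', one_mul]
  have hne : Nonempty {c : K // c ∈ t} := ⟨⟨htne.choose, htne.choose_spec⟩⟩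
  have hb2 : ‖∑ c : {c : K // c ∈ t}, (u c x' - A c) • f ((c : K) : E)‖ < ε/2 := by
    refine (norm_sum_le _ _).trans_lt ?_
    have hlt : ∀ c ∈ (Finset.univ : Finset {c : K // c ∈ t}),
        ‖(u c x' - A c) • f ((c : K) : E)‖ < η * (‖f ((c : K) : E)‖ + 1) := by
      intro c _
      rw [norm_smul, Real.norm_eq_abs]
      have h1 : ‖f ((c : K) : E)‖ ≤ ‖f ((c : K) : E)‖ + 1 := by linarith
      have h2 : |u c x' - A c| < η := hcd c x'
      calc |u c x' - A c| * ‖f ((c : K) : E)‖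
          ≤ |u c x' - A c| * (‖f ((c : K) : E)‖ + 1) :=
            mul_le_mul_of_nonneg_left h1 (abs_nonneg _)
        _ < η * (‖f ((c : K) : E)‖ + 1) :=
            mul_lt_mul_of_pos_right h2 (by positivity)
    have hsum := Finset.sum_lt_sum_of_nonempty Finset.univ_nonempty hlt
    refine hsum.trans_le ?_
    rw [← Finset.mul_sum, Finset.sum_coe_sort t (fun c => ‖f ((c : K) : E)‖ + 1), ← hM', hηdef]
    rw [div_mul_eq_mul_div, mul_comm 2 M', ← div_div, mul_div_assoc, div_self hM'pos.ne', mul_one]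
  calc ‖(∑ c : {c : K // c ∈ t}, u c x' • (f x - f ((c : K) : E)))
        + ∑ c : {c : K // c ∈ t}, (u c x' - A c) • f ((c : K) : E)‖
      ≤ ‖∑ c : {c : K // c ∈ t}, u c x' • (f x - f ((c : K) : E))‖
        + ‖∑ c : {c : K // c ∈ t}, (u c x' - A c) • f ((c : K) : E)‖ := norm_add_le _ _
    _ < ε := by linarith

/-- **Theorem 2 (finite-rank approximation of Banach-valued maps).**
Let `H` be a real Hilbert space, `n > 0`, `K ⊆ H^n` compact (product inner product),
`Y` a real Banach space, and `f : K → Y` continuous. For every `ε > 0` there are `r ∈ ℕ`,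
vectors `y j ∈ Y`, continuous linear functionals `φ j i : H → ℝ`, and continuous
`ζ j : ℝ → ℝ` such that `g x := ∑ j, ζ j (∑ i, φ j i (x i)) • y j` satisfies
`‖f x - g x‖ < ε` on `K`; moreover `g(K)` lies in the span of `y 1, …, y r`. -/
theorem stmt_6
    (H : Type*) [NormedAddCommGroup H] [InnerProductSpace ℝ H] [CompleteSpace H]
    (n : ℕ) (hn : 0 < n)
    (K : Set (PiLp 2 (fun _ : Fin n => H))) (hK : IsCompact K)
    (Y : Type*) [NormedAddCommGroup Y] [NormedSpace ℝ Y] [CompleteSpace Y]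
    (f : PiLp 2 (fun _ : Fin n => H) → Y) (hf : ContinuousOn f K)
    (ε : ℝ) (hε : 0 < ε) :
    ∃ (r : ℕ) (y : Fin r → Y) (φ : Fin r → Fin n → (H →L[ℝ] ℝ)) (ζ : Fin r → ℝ → ℝ),
      (∀ j, Continuous (ζ j)) ∧
      (∀ x ∈ K, ‖f x - ∑ j, ζ j (∑ i, φ j i (x i)) • y j‖ < ε) ∧
      (∀ x ∈ K, (∑ j, ζ j (∑ i, φ j i (x i)) • y j) ∈ Submodule.span ℝ (Set.range y)) := by
  obtain ⟨r, y, vv, ζ, hζ, happrox⟩ := main_approx K hK f hf hε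
  refine ⟨r, y, fun j i => innerSL ℝ (vv j i), ζ, hζ, fun x hx => ?_, fun x hx => ?_⟩
  · have hip : ∀ j, ∑ i, (innerSL ℝ (vv j i)) (x i) = (inner ℝ (vv j) x : ℝ) := by
      intro j
      rw [PiLp.inner_apply]
      rfl
    simp_rw [hip]
    exact happrox x hx
  · exact Submodule.sum_mem _ fun j _ =>
      Submodule.smul_mem _ _ (Submodule.subset_span ⟨j, rfl⟩)
end

section
/- Let H be a real Hilbert space, let n and d be positive natural numbers, equip H^n with the product inner product, let K ⊆ H^n be compact, and let F = (F_1,…,F_d) : K → ℝ^d be continuous. Then for every ε > 0 there exist r ∈ ℕ, real coefficients a_{ℓj} ∈ ℝ (for 1 ≤ ℓ ≤ d, 1 ≤ j ≤ r), continuous linear functionals φ_{ji} : H → ℝ, and continuous functions ζ_j : ℝ → ℝ such that for every x = (x_1,…,x_n) ∈ K and every ℓ ∈ {1,…,d}, |F_ℓ(x) − Σ_{j=1}^r a_{ℓj} ζ_j(Σ_{i=1}^n φ_{ji}(x_i))| < ε. -/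
set_option maxHeartbeats 1000000 in
set_option synthInstance.maxHeartbeats 100000 in
/-- **Step 3 of the proof of Theorem 2 (coordinatewise ridge approximation).**
For compact `K ⊆ H^n` (product inner product) and continuous `F = (F_1, …, F_d) : K → ℝ^d`,
and every `ε > 0`, there are `r ∈ ℕ`, coefficients `a ℓ j ∈ ℝ`, continuous linear
functionals `φ j i : H → ℝ`, and continuous `ζ j : ℝ → ℝ` such that for every `x ∈ K` and
every coordinate `ℓ`, `|F_ℓ x - ∑ j, a ℓ j * ζ j (∑ i, φ j i (x i))| < ε`. -/
theorem stmt_9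
    (H : Type*) [NormedAddCommGroup H] [InnerProductSpace ℝ H] [CompleteSpace H]
    (n d : ℕ) (hn : 0 < n) (hd : 0 < d)
    (K : Set (PiLp 2 (fun _ : Fin n => H))) (hK : IsCompact K)
    (F : PiLp 2 (fun _ : Fin n => H) → EuclideanSpace ℝ (Fin d)) (hF : ContinuousOn F K)
    (ε : ℝ) (hε : 0 < ε) :
    ∃ (r : ℕ) (a : Fin d → Fin r → ℝ) (φ : Fin r → Fin n → (H →L[ℝ] ℝ))
      (ζ : Fin r → ℝ → ℝ),
      (∀ j, Continuous (ζ j)) ∧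
      ∀ x ∈ K, ∀ ℓ : Fin d,
        |F x ℓ - ∑ j, a ℓ j * ζ j (∑ i, φ j i (x i))| < ε := by
  classical
  haveI : CompactSpace K := isCompact_iff_compactSpace.mp hK
  -- coordinate embeddings
  let emb : Fin n → (H →L[ℝ] PiLp 2 (fun _ : Fin n => H)) := fun i =>
    ((PiLp.continuousLinearEquiv 2 ℝ (fun _ : Fin n => H)).symm.toContinuousLinearMap).comp
      (ContinuousLinearMap.pi (fun k : Fin n =>
        if k = i then ContinuousLinearMap.id ℝ H else 0))
  have emb_sum : ∀ x : PiLp 2 (fun _ : Fin n => H), ∑ i, emb i (x i) = x := by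
    intro x
    apply (PiLp.continuousLinearEquiv 2 ℝ (fun _ : Fin n => H)).injective
    rw [map_sum]
    funext k
    simp only [emb, ContinuousLinearMap.coe_comp', Function.comp_apply,
      ContinuousLinearEquiv.coe_coe, ContinuousLinearEquiv.apply_symm_apply,
      Finset.sum_apply, ContinuousLinearMap.pi_apply]
    have h : ∀ x1 : Fin n,
        (if k = x1 then ContinuousLinearMap.id ℝ H else 0) (x x1)
          = if k = x1 then x x1 else 0 := by
      intro x1; split <;> simp
    rw [Finset.sum_congr rfl (fun x1 _ => h x1), Finset.sum_ite_eq]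
    simp
  -- the generating set
  let S : Set C(K, ℝ) :=
    {f | ∃ ψ : PiLp 2 (fun _ : Fin n => H) →L[ℝ] ℝ, ∀ x : K, f x = Real.exp (ψ x)}
  let Smon : Submonoid C(K, ℝ) :=
    { carrier := S
      one_mem' := ⟨0, by simp⟩
      mul_mem' := by
        rintro f g ⟨ψ, hψ⟩ ⟨χ, hχ⟩
        exact ⟨ψ + χ, fun x => by
          simp [ContinuousMap.mul_apply, hψ x, hχ x, Real.exp_add]⟩ }
  let A : Subalgebra ℝ C(K, ℝ) := Algebra.adjoin ℝ S
  have hsep : A.SeparatesPoints := by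
    rintro x y hxy
    obtain ⟨ψ, hψ⟩ := SeparatingDual.exists_separating_of_ne (R := ℝ)
      (show (x : PiLp 2 (fun _ : Fin n => H)) ≠ (y : PiLp 2 (fun _ : Fin n => H)) from
        Subtype.coe_ne_coe.mpr hxy)
    refine ⟨_, ⟨⟨fun z : K => Real.exp (ψ (z : PiLp 2 (fun _ : Fin n => H))),
      Real.continuous_exp.comp (ψ.continuous.comp continuous_subtype_val)⟩,
      Algebra.subset_adjoin ⟨ψ, fun _ => rfl⟩, rfl⟩, ?_⟩
    simpa using fun h => hψ (Real.exp_injective h)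
  have hclos : ((Submonoid.closure S : Submonoid C(K, ℝ)) : Set C(K, ℝ)) = S := by
    rw [show S = (Smon : Set C(K, ℝ)) from rfl, Submonoid.closure_eq]
  -- coordinatewise approximation
  have main : ∀ ℓ : Fin d, ∃ (m : ℕ) (c : Fin m → ℝ)
      (ψ : Fin m → (PiLp 2 (fun _ : Fin n => H) →L[ℝ] ℝ)),
      ∀ x ∈ K, |F x ℓ - ∑ i, c i * Real.exp (ψ i x)| < ε := by
    intro ℓ
    have hcont : Continuous (fun x : K => F x ℓ) := by
      have h1 : Continuous (K.restrict F) := hF.restrict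
      have h2 : Continuous (fun y : EuclideanSpace ℝ (Fin d) => y ℓ) :=
        (continuous_apply ℓ).comp
          (PiLp.continuousLinearEquiv 2 ℝ (fun _ : Fin d => ℝ)).continuous
      exact h2.comp h1
    obtain ⟨⟨g, hg⟩, hgnear⟩ :=
      ContinuousMap.exists_mem_subalgebra_near_continuous_of_separatesPoints A hsep
        (fun x : K => F x ℓ) hcont ε hε
    have hspan : g ∈ Submodule.span ℝ S := by
      have h1 : g ∈ Subalgebra.toSubmodule (Algebra.adjoin ℝ S) := hg
      rw [Algebra.adjoin_eq_span] at h1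
      rwa [hclos] at h1
    obtain ⟨m, c, v, hsum⟩ := Submodule.mem_span_set'.mp hspan
    choose ψ hψ using fun i => (v i).2
    refine ⟨m, c, ψ, fun x hx => ?_⟩
    have hx' := hgnear ⟨x, hx⟩
    have hval : ∑ i, c i * Real.exp (ψ i x) = g ⟨x, hx⟩ := by
      rw [← hsum]
      rw [ContinuousMap.coe_sum, Finset.sum_apply]
      refine Finset.sum_congr rfl fun i _ => ?_
      rw [ContinuousMap.coe_smul, Pi.smul_apply, hψ i ⟨x, hx⟩, smul_eq_mul]
    rw [abs_sub_comm, ← Real.norm_eq_abs, hval]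
    exact hx'
  choose m c ψ hmain using main
  let σ := Σ ℓ : Fin d, Fin (m ℓ)
  let r := Fintype.card σ
  let e : Fin r ≃ σ := (Fintype.equivFin σ).symm
  refine ⟨r, fun ℓ j => if (e j).1 = ℓ then c (e j).1 (e j).2 else 0,
    fun j i => (ψ (e j).1 (e j).2).comp (emb i),
    fun _ => Real.exp, fun _ => Real.continuous_exp, ?_⟩
  intro x hx ℓ
  have key : ∀ j : Fin r,
      (∑ i, (ψ (e j).1 (e j).2).comp (emb i) (x i)) = ψ (e j).1 (e j).2 x := by
    intro j
    rw [show (∑ i, (ψ (e j).1 (e j).2).comp (emb i) (x i))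
        = ψ (e j).1 (e j).2 (∑ i, emb i (x i)) by rw [map_sum]; rfl, emb_sum]
  have hcalc : (∑ j, (if (e j).1 = ℓ then c (e j).1 (e j).2 else 0) *
      Real.exp (∑ i, (ψ (e j).1 (e j).2).comp (emb i) (x i)))
      = ∑ i, c ℓ i * Real.exp (ψ ℓ i x) := by
    have h1 : (∑ j, (if (e j).1 = ℓ then c (e j).1 (e j).2 else 0) *
        Real.exp (∑ i, (ψ (e j).1 (e j).2).comp (emb i) (x i)))
        = ∑ p : σ, (if p.1 = ℓ then c p.1 p.2 else 0) * Real.exp (ψ p.1 p.2 x) := by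
      refine Fintype.sum_equiv e _ _ fun j => ?_
      rw [key j]
    rw [h1, ← Finset.univ_sigma_univ, Finset.sum_sigma]
    rw [Finset.sum_eq_single_of_mem ℓ (Finset.mem_univ ℓ)
      (fun b _ hb => by simp [hb])]
    simp
  rw [hcalc]
  exact hmain ℓ x hx
end

section
/- Let H = L²((0,1), ℝ) and let K ⊆ H × H be compact. Let Φ : ℝ² → ℝ be continuous, suppose that for every (u,v) ∈ K the function x ↦ Φ(u(x), v(x)) is integrable on (0,1), and suppose that the functional f : K → ℝ defined by f(u,v) = ∫₀¹ Φ(u(x), v(x)) dx is continuous on K. Then for every ε > 0 there exist r ∈ ℕ, functions h_{j1}, h_{j2} ∈ L²((0,1), ℝ), and continuous functions ζ_j : ℝ → ℝ (for 1 ≤ j ≤ r) such that sup_{(u,v) ∈ K} |f(u,v) − Σ_{j=1}^r ζ_j(⟨u, h_{j1}⟩ + ⟨v, h_{j2}⟩)| < ε, where ⟨u, h⟩ = ∫₀¹ u(x) h(x) dx. -/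
open MeasureTheory

noncomputable section StoneAux

abbrev HsAux : Type := Lp ℝ 2 (volume.restrict (Set.Ioo (0:ℝ) 1))
abbrev EsAux : Type := WithLp 2 (HsAux × HsAux)

lemma inner_int_aux (u h : HsAux) :
    (inner ℝ u h : ℝ) = ∫ x in Set.Ioo (0:ℝ) 1, u x * h x := by
  rw [MeasureTheory.L2.inner_def]
  simp [RCLike.inner_apply, mul_comm]

lemma inner_prod_int_aux (p q : EsAux) :
    (inner ℝ p q : ℝ) =
      (∫ x in Set.Ioo (0:ℝ) 1, p.ofLp.1 x * q.ofLp.1 x) +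
        ∫ x in Set.Ioo (0:ℝ) 1, p.ofLp.2 x * q.ofLp.2 x := by
  rw [WithLp.prod_inner_apply, inner_int_aux, inner_int_aux]

end StoneAux

/-- **Section 4.1 (integral-type functionals on `L²`).** Let `H = L²((0,1), ℝ)` and let
`K ⊆ H × H` (product Hilbert structure) be compact. If `Φ : ℝ² → ℝ` is continuous,
`x ↦ Φ(u x, v x)` is integrable on `(0,1)` for each `(u,v) ∈ K`, and the functional
`f(u,v) = ∫₀¹ Φ(u x, v x) dx` is continuous on `K`, then for every `ε > 0` the functional
`f` is uniformly approximated on `K` within `ε` by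
`(u,v) ↦ ∑ j, ζ j (⟨u, h j 1⟩ + ⟨v, h j 2⟩)` with `h j i ∈ L²((0,1), ℝ)` and continuous
`ζ j : ℝ → ℝ`, where `⟨u, h⟩ = ∫₀¹ u x * h x dx`. -/
theorem stmt_10
    (K : Set (WithLp 2 ((Lp ℝ 2 (volume.restrict (Set.Ioo (0:ℝ) 1))) ×
      (Lp ℝ 2 (volume.restrict (Set.Ioo (0:ℝ) 1)))))) (hK : IsCompact K)
    (Φ : ℝ × ℝ → ℝ) (hΦ : Continuous Φ)
    (hint : ∀ p ∈ K, IntegrableOn (fun x => Φ (p.ofLp.1 x, p.ofLp.2 x)) (Set.Ioo (0:ℝ) 1))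
    (f : WithLp 2 ((Lp ℝ 2 (volume.restrict (Set.Ioo (0:ℝ) 1))) ×
      (Lp ℝ 2 (volume.restrict (Set.Ioo (0:ℝ) 1)))) → ℝ)
    (hfdef : ∀ p ∈ K, f p = ∫ x in Set.Ioo (0:ℝ) 1, Φ (p.ofLp.1 x, p.ofLp.2 x))
    (hf : ContinuousOn f K)
    (ε : ℝ) (hε : 0 < ε) :
    ∃ (r : ℕ) (h₁ h₂ : Fin r → Lp ℝ 2 (volume.restrict (Set.Ioo (0:ℝ) 1)))
      (ζ : Fin r → ℝ → ℝ),
      (∀ j, Continuous (ζ j)) ∧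
      ∀ p ∈ K,
        |f p - ∑ j, ζ j ((∫ x in Set.Ioo (0:ℝ) 1, p.ofLp.1 x * h₁ j x) +
          ∫ x in Set.Ioo (0:ℝ) 1, p.ofLp.2 x * h₂ j x)| < ε := by
  haveI : CompactSpace ↥K := isCompact_iff_compactSpace.mp hK
  -- the exponential-of-linear generators
  let gen : EsAux → C(↥K, ℝ) := fun q =>
    ⟨fun x => Real.exp (inner ℝ (x : EsAux) q),
      Real.continuous_exp.comp (Continuous.inner continuous_subtype_val continuous_const)⟩
  let G : Set C(↥K, ℝ) := Set.range gen
  let M : Submodule ℝ C(↥K, ℝ) := Submodule.span ℝ G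
  have h_one : (1 : C(↥K, ℝ)) ∈ M := by
    refine Submodule.subset_span ⟨0, ?_⟩
    ext x
    simp [gen]
  have h_mul : ∀ a b, a ∈ M → b ∈ M → a * b ∈ M := by
    intro a b ha hb
    induction ha, hb using Submodule.span_induction₂ with
    | mem_mem x y hx hy =>
      obtain ⟨q, rfl⟩ := hx
      obtain ⟨q', rfl⟩ := hy
      refine Submodule.subset_span ⟨q + q', ?_⟩
      ext z
      simp only [gen, ContinuousMap.mul_apply, ContinuousMap.coe_mk]
      rw [inner_add_right, Real.exp_add]
    | zero_left y hy => simpa using Submodule.zero_mem M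
    | zero_right x hx => simpa using Submodule.zero_mem M

    | add_left x y z hx hy hz h1 h2 =>
      rw [add_mul]; exact Submodule.add_mem M h1 h2
    | add_right x y z hx hy hz h1 h2 =>
      rw [mul_add]; exact Submodule.add_mem M h1 h2
    | smul_left r x y hx hy h => rw [smul_mul_assoc]; exact Submodule.smul_mem M r h
    | smul_right r x y hx hy h => rw [mul_smul_comm]; exact Submodule.smul_mem M r h
  let A : Subalgebra ℝ C(↥K, ℝ) := M.toSubalgebra h_one h_mul
  have hsep : A.SeparatesPoints := by
    intro x y hxy
    have hne : (x : EsAux) ≠ (y : EsAux) := Subtype.coe_injective.ne hxy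
    refine ⟨gen ((x : EsAux) - (y : EsAux)), ⟨gen _, Submodule.subset_span ⟨_, rfl⟩, rfl⟩, ?_⟩
    have h0 : ((x : EsAux) - (y : EsAux)) ≠ 0 := sub_ne_zero.mpr hne
    have : (inner ℝ ((x : EsAux) - (y : EsAux)) ((x : EsAux) - (y : EsAux)) : ℝ) ≠ 0 :=
      inner_self_ne_zero.mpr h0
    rw [inner_sub_left] at this
    simp only [gen, ContinuousMap.coe_mk]
    intro hcontra
    exact this (sub_eq_zero_of_eq (Real.exp_eq_exp.mp hcontra))
  let fK : C(↥K, ℝ) := ⟨K.restrict f, hf.restrict⟩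
  obtain ⟨⟨g, hgA⟩, hg⟩ :=
    ContinuousMap.exists_mem_subalgebra_near_continuousMap_of_separatesPoints A hsep fK ε hε
  -- every element of the span is representable in the desired form
  have hrep : ∀ g ∈ M, ∃ (r : ℕ) (h₁ h₂ : Fin r → HsAux) (ζ : Fin r → ℝ → ℝ),
      (∀ j, Continuous (ζ j)) ∧ ∀ x : ↥K, g x = ∑ j, ζ j
        ((∫ t in Set.Ioo (0:ℝ) 1, (x : EsAux).ofLp.1 t * h₁ j t) +
          ∫ t in Set.Ioo (0:ℝ) 1, (x : EsAux).ofLp.2 t * h₂ j t) := by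
    intro g hg
    induction hg using Submodule.span_induction with
    | mem x hx =>
      obtain ⟨q, rfl⟩ := hx
      refine ⟨1, fun _ => q.ofLp.1, fun _ => q.ofLp.2, fun _ => Real.exp, fun _ => Real.continuous_exp, ?_⟩
      intro x
      simp [gen, WithLp.prod_inner_apply, inner_int_aux]
    | zero => exact ⟨0, finZeroElim, finZeroElim, finZeroElim, fun j => j.elim0, by simp⟩
    | add a b ha hb iha ihb =>
      obtain ⟨r₁, h₁, h₂, ζ, hζ, hval⟩ := iha
      obtain ⟨r₂, h₁', h₂', ζ', hζ', hval'⟩ := ihb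
      refine ⟨r₁ + r₂, Fin.append h₁ h₁', Fin.append h₂ h₂', Fin.append ζ ζ', ?_, ?_⟩
      · intro j
        refine Fin.addCases (fun i => ?_) (fun i => ?_) j
        · simpa [Fin.append_left] using hζ i
        · simpa [Fin.append_right] using hζ' i
      · intro x
        rw [ContinuousMap.add_apply, hval x, hval' x, Fin.sum_univ_add]
        congr 1 <;> refine Finset.sum_congr rfl fun j _ => ?_ <;>
          simp [Fin.append_left, Fin.append_right]
    | smul c a ha iha =>
      obtain ⟨r, h₁, h₂, ζ, hζ, hval⟩ := iha
      refine ⟨r, h₁, h₂, fun j t => c * ζ j t, fun j => continuous_const.mul (hζ j), ?_⟩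
      intro x
      rw [ContinuousMap.smul_apply, hval x, smul_eq_mul, Finset.mul_sum]
  obtain ⟨r, h₁, h₂, ζ, hζ, hval⟩ := hrep g hgA
  refine ⟨r, h₁, h₂, ζ, hζ, ?_⟩
  intro p hp
  have h1 : f p = fK ⟨p, hp⟩ := rfl
  have h2 : (∑ j, ζ j ((∫ x in Set.Ioo (0:ℝ) 1, p.ofLp.1 x * h₁ j x) +
      ∫ x in Set.Ioo (0:ℝ) 1, p.ofLp.2 x * h₂ j x)) = g ⟨p, hp⟩ := (hval ⟨p, hp⟩).symm
  rw [h1, h2]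
  calc |fK ⟨p, hp⟩ - g ⟨p, hp⟩| = ‖(fK - g) ⟨p, hp⟩‖ := by
        rw [ContinuousMap.sub_apply]; exact (Real.norm_eq_abs _).symm
    _ ≤ ‖fK - g‖ := ContinuousMap.norm_coe_le_norm _ _
    _ = ‖g - fK‖ := by rw [norm_sub_rev]
    _ < ε := hg
end

section
/- Let Ω ⊆ ℝ² be a measurable set, let H = L²(Ω, ℝ), let K ⊆ H be compact, and let f : K → L²(Ω, ℝ) be continuous. Then for every ε > 0 there exist r ∈ ℕ, functions y_1,…,y_r ∈ L²(Ω, ℝ), continuous linear functionals φ_1,…,φ_r : H → ℝ, and continuous functions ζ_1,…,ζ_r : ℝ → ℝ such that sup_{x ∈ K} ‖f(x) − Σ_{j=1}^r ζ_j(φ_j(x)) · y_j‖_{L²(Ω)} < ε. -/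
open MeasureTheory

lemma ridge_dense_s11 {H : Type*} [NormedAddCommGroup H] [InnerProductSpace ℝ H]
    {K : Set H} (hK : IsCompact K) (g : C(K, ℝ)) {ε : ℝ} (hε : 0 < ε) :
    ∃ (n : ℕ) (c : Fin n → ℝ) (φ : Fin n → (H →L[ℝ] ℝ)),
      ∀ x : K, |g x - ∑ j, c j * Real.exp (φ j (x : H))| < ε := by
  haveI : CompactSpace K := isCompact_iff_compactSpace.mp hK
  -- the submonoid of ridge exponentials
  set M : Submonoid C(K, ℝ) :=
    { carrier := {h | ∃ φ : H →L[ℝ] ℝ, ∀ x : K, h x = Real.exp (φ (x : H))}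
      one_mem' := ⟨0, fun x => by simp⟩
      mul_mem' := by
        rintro a b ⟨φ, hφ⟩ ⟨ψ, hψ⟩
        exact ⟨φ + ψ, fun x => by simp [hφ x, hψ x, Real.exp_add]⟩ } with hM
  set A : Subalgebra ℝ C(K, ℝ) := Algebra.adjoin ℝ (M : Set C(K, ℝ)) with hA
  have hsep : A.SeparatesPoints := by
    intro x y hxy
    set v : H := (x : H) - (y : H) with hv
    have hvne : v ≠ 0 := sub_ne_zero.mpr (Subtype.coe_injective.ne hxy)
    refine ⟨_, ⟨⟨fun z : K => Real.exp ((innerSL ℝ v) (z : H)),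
      Real.continuous_exp.comp ((innerSL ℝ v).continuous.comp continuous_subtype_val)⟩,
      Algebra.subset_adjoin ⟨innerSL ℝ v, fun z => rfl⟩, rfl⟩, ?_⟩
    simp only [ContinuousMap.coe_mk]
    rw [Ne, Real.exp_eq_exp]
    intro hEq
    have hEq' : (inner ℝ v (x:H) : ℝ) = inner ℝ v (y:H) := by simpa using hEq
    have : (inner ℝ v v : ℝ) = 0 := by
      rw [hv, inner_sub_right, hEq', sub_self]
    exact hvne (inner_self_eq_zero.mp this)
  obtain ⟨a, hlt⟩ :=
    ContinuousMap.exists_mem_subalgebra_near_continuousMap_of_separatesPoints A hsep g ε hε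
  have haM : (a : C(K, ℝ)) ∈ Submodule.span ℝ (M : Set C(K, ℝ)) := by
    have h2 : (a : C(K, ℝ)) ∈ Subalgebra.toSubmodule (Algebra.adjoin ℝ (M : Set C(K, ℝ))) := a.2
    rwa [Algebra.adjoin_eq_span, Submonoid.closure_eq] at h2
  rw [Submodule.mem_span_set'] at haM
  obtain ⟨n, cf, gf, hrep⟩ := haM
  choose φ hφ using fun i => (gf i).2
  refine ⟨n, cf, φ, fun x => ?_⟩
  have hax : (a : C(K, ℝ)) x = ∑ j, cf j * Real.exp (φ j (x : H)) := by
    rw [← hrep]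
    simp only [ContinuousMap.coe_sum, Finset.sum_apply, ContinuousMap.coe_smul, Pi.smul_apply,
      smul_eq_mul]
    exact Finset.sum_congr rfl fun j _ => by rw [hφ j x]
  rw [← hax]
  have := ContinuousMap.norm_coe_le_norm ((a : C(K, ℝ)) - g) x
  have h2 : |g x - (a : C(K,ℝ)) x| ≤ ‖(a : C(K, ℝ)) - g‖ := by
    rw [abs_sub_comm]
    simpa [Real.norm_eq_abs] using this
  linarith

set_option maxHeartbeats 8000000

/-- **Appendix B (image-to-image maps).** Let `Ω ⊆ ℝ²` be measurable, `H = L²(Ω, ℝ)`,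
`K ⊆ H` compact, and `f : K → L²(Ω, ℝ)` continuous. Then for every `ε > 0` there exist
`r ∈ ℕ`, output templates `y j ∈ L²(Ω, ℝ)`, continuous linear functionals
`φ j : H → ℝ`, and continuous `ζ j : ℝ → ℝ` such that
`‖f x - ∑ j, ζ j (φ j x) • y j‖_{L²(Ω)} < ε` for every `x ∈ K`. -/
theorem stmt_11
    (Ω : Set (EuclideanSpace ℝ (Fin 2))) (hΩ : MeasurableSet Ω)
    (K : Set (Lp ℝ 2 (volume.restrict Ω))) (hK : IsCompact K)
    (f : Lp ℝ 2 (volume.restrict Ω) → Lp ℝ 2 (volume.restrict Ω))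
    (hf : ContinuousOn f K)
    (ε : ℝ) (hε : 0 < ε) :
    ∃ (r : ℕ) (y : Fin r → Lp ℝ 2 (volume.restrict Ω))
      (φ : Fin r → (Lp ℝ 2 (volume.restrict Ω) →L[ℝ] ℝ)) (ζ : Fin r → ℝ → ℝ),
      (∀ j, Continuous (ζ j)) ∧
      ∀ x ∈ K, ‖f x - ∑ j, ζ j (φ j x) • y j‖ < ε := by
  rcases K.eq_empty_or_nonempty with hKe | hKne
  · exact ⟨0, (fun j => j.elim0), (fun j => j.elim0), (fun j => j.elim0),
      fun j => j.elim0, by simp [hKe]⟩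
  haveI : CompactSpace K := isCompact_iff_compactSpace.mp hK
  have hε4 : 0 < ε / 4 := by linarith
  obtain ⟨δ, hδpos, hδ⟩ := Metric.uniformContinuousOn_iff.mp
    (hK.uniformContinuousOn_of_continuous hf) (ε / 4) hε4
  obtain ⟨t, hcover⟩ := hK.elim_nhds_subcover' (fun x _ => Metric.ball (x : Lp ℝ 2 (volume.restrict Ω)) δ)
    (fun x hx => Metric.ball_mem_nhds _ hδpos)
  set ι := {i : K // i ∈ t} with hι
  -- bump functions
  set b : ι → C(K, ℝ) := fun i =>
    ⟨fun x => max 0 (δ - dist (x : Lp ℝ 2 (volume.restrict Ω)) ((i : K) : Lp ℝ 2 (volume.restrict Ω))),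
      continuous_const.max (continuous_const.sub
        (continuous_subtype_val.dist continuous_const))⟩ with hb
  have hb0 : ∀ (i : ι) (x : K), 0 ≤ b i x := fun i x => le_max_left _ _
  have hbpos : ∀ (i : ι) (x : K), 0 < b i x → dist (x : Lp ℝ 2 (volume.restrict Ω)) ((i : K) : Lp ℝ 2 (volume.restrict Ω)) < δ := by
    intro i x h
    rcases lt_max_iff.mp h with h' | h'
    · exact absurd h' (lt_irrefl 0)
    · linarith
  have hs : ∀ x : K, 0 < ∑ i : ι, b i x := by
    intro x
    obtain ⟨i, hit, hxball⟩ := Set.mem_iUnion₂.mp (hcover x.2)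
    refine Finset.sum_pos' (fun i _ => hb0 i x) ⟨⟨i, hit⟩, Finset.mem_univ _, ?_⟩
    have : dist (x : Lp ℝ 2 (volume.restrict Ω)) ((i : K) : Lp ℝ 2 (volume.restrict Ω)) < δ := Metric.mem_ball.mp hxball
    simp only [hb, ContinuousMap.coe_mk]
    exact lt_max_iff.mpr (Or.inr (by linarith))
  -- partition of unity
  set g : ι → C(K, ℝ) := fun i =>
    ⟨fun x => b i x / ∑ j : ι, b j x,
      (b i).continuous.div (continuous_finset_sum _ fun j _ => (b j).continuous)
        (fun x => (hs x).ne')⟩ with hg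
  have hg0 : ∀ (i : ι) (x : K), 0 ≤ g i x := fun i x =>
    div_nonneg (hb0 i x) (hs x).le
  have hgsum : ∀ x : K, ∑ i : ι, g i x = 1 := by
    intro x
    simp only [hg, ContinuousMap.coe_mk]
    rw [← Finset.sum_div]
    exact div_self (hs x).ne'
  have hgb : ∀ (i : ι) (x : K), 0 < g i x → dist (x : Lp ℝ 2 (volume.restrict Ω)) ((i : K) : Lp ℝ 2 (volume.restrict Ω)) < δ := by
    intro i x h
    apply hbpos i x
    by_contra hb'
    push_neg at hb'
    have hb0' : b i x = 0 := le_antisymm hb' (hb0 i x)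
    rw [hg] at h
    simp only [ContinuousMap.coe_mk, hb0', zero_div] at h
    exact lt_irrefl 0 h
  -- first approximation
  have happrox1 : ∀ x : K, ‖f (x : Lp ℝ 2 (volume.restrict Ω)) - ∑ i : ι, g i x • f ((i : K) : Lp ℝ 2 (volume.restrict Ω))‖ ≤ ε / 4 := by
    intro x
    have key : f (x : Lp ℝ 2 (volume.restrict Ω)) - ∑ i : ι, g i x • f ((i : K) : Lp ℝ 2 (volume.restrict Ω))
        = ∑ i : ι, g i x • (f (x : Lp ℝ 2 (volume.restrict Ω)) - f ((i : K) : Lp ℝ 2 (volume.restrict Ω))) := by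
      simp only [smul_sub, Finset.sum_sub_distrib, ← Finset.sum_smul, hgsum x, one_smul]
    rw [key]
    refine (norm_sum_le _ _).trans ?_
    have hterm : ∀ i : ι, ‖g i x • (f (x : Lp ℝ 2 (volume.restrict Ω)) - f ((i : K) : Lp ℝ 2 (volume.restrict Ω)))‖ ≤ g i x * (ε / 4) := by
      intro i
      rw [norm_smul, Real.norm_eq_abs, abs_of_nonneg (hg0 i x)]
      rcases eq_or_lt_of_le (hg0 i x) with h | h
      · rw [← h]; simp
      · refine mul_le_mul_of_nonneg_left ?_ (hg0 i x)
        have hd := hgb i x h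
        have := hδ (x : Lp ℝ 2 (volume.restrict Ω)) x.2 ((i : K) : Lp ℝ 2 (volume.restrict Ω)) (i : K).2 hd
        rw [dist_eq_norm] at this
        exact this.le
    refine (Finset.sum_le_sum fun i _ => hterm i).trans ?_
    rw [← Finset.sum_mul, hgsum x, one_mul]
  -- second approximation : ridge approximation of the coefficients
  set C : ℝ := ∑ i : ι, ‖f ((i : K) : Lp ℝ 2 (volume.restrict Ω))‖ with hCdef
  have hC0 : 0 ≤ C := Finset.sum_nonneg fun i _ => norm_nonneg _
  have hε'' : 0 < ε / 4 / (C + 1) := div_pos hε4 (by linarith)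
  choose n c φ hφ using fun i : ι => ridge_dense_s11 hK (g i) hε''
  set σ := (i : ι) × Fin (n i) with hσ
  let e : σ ≃ Fin (Fintype.card σ) := Fintype.equivFin σ
  refine ⟨Fintype.card σ, fun j => f (((e.symm j).1 : K) : Lp ℝ 2 (volume.restrict Ω)),
    fun j => φ (e.symm j).1 (e.symm j).2,
    fun j s => c (e.symm j).1 (e.symm j).2 * Real.exp s,
    fun j => continuous_const.mul Real.continuous_exp, ?_⟩
  intro x hx
  set X : K := ⟨x, hx⟩ with hX
  have hsum_eq : ∑ j : Fin (Fintype.card σ),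
      (c (e.symm j).1 (e.symm j).2 * Real.exp (φ (e.symm j).1 (e.symm j).2 x))
        • f (((e.symm j).1 : K) : Lp ℝ 2 (volume.restrict Ω))
      = ∑ i : ι, (∑ k, c i k * Real.exp (φ i k x)) • f ((i : K) : Lp ℝ 2 (volume.restrict Ω)) := by
    rw [Equiv.sum_comp e.symm
      (fun s : σ => (c s.1 s.2 * Real.exp (φ s.1 s.2 x)) • f ((s.1 : K) : Lp ℝ 2 (volume.restrict Ω)))]
    rw [← Finset.univ_sigma_univ, Finset.sum_sigma]
    exact Finset.sum_congr rfl fun i _ => by rw [Finset.sum_smul]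
  rw [hsum_eq]
  have split : f x - ∑ i : ι, (∑ k, c i k * Real.exp (φ i k x)) • f ((i : K) : Lp ℝ 2 (volume.restrict Ω))
      = (f x - ∑ i : ι, g i X • f ((i : K) : Lp ℝ 2 (volume.restrict Ω)))
        + ∑ i : ι, (g i X - ∑ k, c i k * Real.exp (φ i k x)) • f ((i : K) : Lp ℝ 2 (volume.restrict Ω)) := by
    simp only [sub_smul, Finset.sum_sub_distrib]
    abel
  rw [split]
  have hsecond : ‖∑ i : ι, (g i X - ∑ k, c i k * Real.exp (φ i k x)) • f ((i : K) : Lp ℝ 2 (volume.restrict Ω))‖ ≤ ε / 4 / (C + 1) * C := by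
    refine (norm_sum_le _ _).trans ?_
    have : ∀ i : ι, ‖(g i X - ∑ k, c i k * Real.exp (φ i k x)) • f ((i : K) : Lp ℝ 2 (volume.restrict Ω))‖
        ≤ ε / 4 / (C + 1) * ‖f ((i : K) : Lp ℝ 2 (volume.restrict Ω))‖ := by
      intro i
      rw [norm_smul, Real.norm_eq_abs]
      exact mul_le_mul_of_nonneg_right (le_of_lt (hφ i X)) (norm_nonneg _)
    refine (Finset.sum_le_sum fun i _ => this i).trans ?_
    rw [← Finset.mul_sum, hCdef]
  have hCC : ε / 4 / (C + 1) * C < ε / 4 := by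
    rw [div_mul_eq_mul_div, div_lt_iff₀ (by linarith : (0:ℝ) < C + 1)]
    nlinarith
  calc ‖(f x - ∑ i : ι, g i X • f ((i : K) : Lp ℝ 2 (volume.restrict Ω)))
        + ∑ i : ι, (g i X - ∑ k, c i k * Real.exp (φ i k x)) • f ((i : K) : Lp ℝ 2 (volume.restrict Ω))‖
      ≤ ‖f x - ∑ i : ι, g i X • f ((i : K) : Lp ℝ 2 (volume.restrict Ω))‖
        + ‖∑ i : ι, (g i X - ∑ k, c i k * Real.exp (φ i k x)) • f ((i : K) : Lp ℝ 2 (volume.restrict Ω))‖ := norm_add_le _ _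
    _ < ε / 4 + ε / 4 := by
        have h1 := happrox1 X
        have : (X : Lp ℝ 2 (volume.restrict Ω)) = x := rfl
        rw [this] at h1
        linarith [hsecond, hCC]
    _ < ε := by linarith
end
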